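/- Let Γ be a finite simple graph with n vertices where n is odd, and let {v} be a one-vertex graph with vertex set disjoint from that of Γ. Then Lights Out is not universally solvable on the graph join Γ + {v}. -/

import Mathlib

open scoped Classical in
/-- The neighborhood matrix of a finite simple graph over the field `ZMod 2`:
the entry at `(i, j)` is `1` if `i = j` or `i` and `j` are adjacent, and `0` otherwise. -/
noncomputable def nbhdMatrix {V : Type} [Fintype V] [DecidableEq V] (G : SimpleGraph V) :
    Matrix V V (ZMod 2) :=
  Matrix.of fun i j => if i = j ∨ G.Adj i j then 1 else 0

/-- Lights Out is universally solvable on a finite simple graph iff its neighborhood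
matrix over `ZMod 2` is invertible. -/
def UniversallySolvable {V : Type} [Fintype V] [DecidableEq V] (G : SimpleGraph V) : Prop :=
  IsUnit (nbhdMatrix G)

/-- The graph join of two graphs on disjoint vertex sets: it contains all edges of both
graphs together with an edge between every vertex of the first and every vertex of the
second. -/
def graphJoin {V W : Type} (G : SimpleGraph V) (H : SimpleGraph W) : SimpleGraph (V ⊕ W) where
  Adj := fun
    | .inl a, .inl b => G.Adj a b
    | .inr a, .inr b => H.Adj a b
    | .inl _, .inr _ => True
    | .inr _, .inl _ => True
  symm := by
    refine ⟨?_⟩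
    rintro (a | a) (b | b) h
    · exact G.adj_symm h
    · trivial
    · trivial
    · exact H.adj_symm h
  loopless := by
    refine ⟨?_⟩
    rintro (a | a) h
    · exact G.irrefl h
    · exact H.irrefl h

/-- A symmetric matrix over `ZMod 2` with zero diagonal and odd size has zero determinant. -/
lemma det_eq_zero_of_alt {V : Type} [Fintype V] [DecidableEq V] (B : Matrix V V (ZMod 2))
    (hsymm : ∀ i j, B i j = B j i) (hdiag : ∀ i, B i i = 0)
    (hodd : Odd (Fintype.card V)) : B.det = 0 := by
  have hndvd : ¬ (2 ∣ Fintype.card V) := by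
    rw [Nat.odd_iff] at hodd; omega
  rw [Matrix.det_apply]
  have hsmul : ∀ σ : Equiv.Perm V,
      Equiv.Perm.sign σ • ∏ i, B (σ i) i = ∏ i, B (σ i) i := by
    intro σ
    rcases Int.units_eq_one_or (Equiv.Perm.sign σ) with h | h <;> rw [h] <;>
      simp [Units.smul_def, CharTwo.neg_eq]
  calc (∑ σ : Equiv.Perm V, Equiv.Perm.sign σ • ∏ i, B (σ i) i)
      = ∑ σ : Equiv.Perm V, ∏ i, B (σ i) i := by
        exact Finset.sum_congr rfl fun σ _ => hsmul σ
    _ = 0 := by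
        refine Finset.sum_ninvolution (fun σ => σ⁻¹) ?_ ?_ (fun _ => Finset.mem_univ _) ?_
        · intro σ
          have : (∏ i, B (σ⁻¹ i) i) = ∏ i, B (σ i) i := by
            rw [← Equiv.prod_comp σ fun i => B (σ⁻¹ i) i]
            simp [hsymm]
          rw [this, CharTwo.add_self_eq_zero]
        · intro σ hne
          by_contra h
          have h' : σ⁻¹ = σ := h
          -- σ is an involution; odd cardinality gives a fixed point
          have hσ2 : σ ^ 2 ^ 1 = 1 := by
            rw [pow_one, pow_two]
            nth_rewrite 2 [← h']
            simp
          obtain ⟨a, ha⟩ := Equiv.Perm.exists_fixed_point_of_prime hndvd hσ2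
          exact hne (Finset.prod_eq_zero (Finset.mem_univ a) (by rw [ha]; exact hdiag a))
        · intro σ; simp

/-- If `Γ` has an odd number of vertices, then Lights Out is not universally solvable
on the graph join `Γ + {v}` of `Γ` with a one-vertex graph. -/
theorem not_universallySolvable_join_vertex_of_odd {V : Type} [Fintype V] [DecidableEq V]
    (G : SimpleGraph V) (hodd : Odd (Fintype.card V)) :
    ¬ UniversallySolvable (graphJoin G (⊥ : SimpleGraph (Fin 1))) := by
  classical
  intro hU
  set M := nbhdMatrix (graphJoin G (⊥ : SimpleGraph (Fin 1))) with hMdef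
  set A := nbhdMatrix G with hAdef
  -- all-ones blocks
  set J₁ : Matrix V (Fin 1) (ZMod 2) := Matrix.of fun _ _ => 1 with hJ₁
  set J₂ : Matrix (Fin 1) V (ZMod 2) := Matrix.of fun _ _ => 1 with hJ₂
  have hM : M = Matrix.fromBlocks A J₁ J₂ 1 := by
    ext i j
    rcases i with i | i <;> rcases j with j | j
    · simp [hMdef, hAdef, nbhdMatrix, graphJoin]
    · simp [hMdef, nbhdMatrix, graphJoin, hJ₁]
    · simp [hMdef, nbhdMatrix, graphJoin, hJ₂]
    · simp [hMdef, nbhdMatrix, graphJoin, Matrix.one_apply, Fin.eq_zero]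
  set E : Matrix (V ⊕ Fin 1) (V ⊕ Fin 1) (ZMod 2) := Matrix.fromBlocks 1 J₁ 0 1 with hE
  have hEM : E * M = Matrix.fromBlocks (A + J₁ * J₂) 0 J₂ 1 := by
    rw [hM, hE, Matrix.fromBlocks_multiply]
    have e1 : (1 : Matrix V V (ZMod 2)) * A + J₁ * J₂ = A + J₁ * J₂ := by
      rw [Matrix.one_mul]
    have e2 : (1 : Matrix V V (ZMod 2)) * J₁ + J₁ * (1 : Matrix (Fin 1) (Fin 1) (ZMod 2)) = 0 := by
      rw [Matrix.one_mul, Matrix.mul_one]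
      ext i j
      simp [Matrix.add_apply, CharTwo.add_self_eq_zero]
    have e3 : (0 : Matrix (Fin 1) V (ZMod 2)) * A + (1 : Matrix (Fin 1) (Fin 1) (ZMod 2)) * J₂
        = J₂ := by rw [Matrix.zero_mul, Matrix.one_mul, zero_add]
    have e4 : (0 : Matrix (Fin 1) V (ZMod 2)) * J₁ + (1 : Matrix (Fin 1) (Fin 1) (ZMod 2)) * 1
        = 1 := by rw [Matrix.zero_mul, Matrix.one_mul, zero_add]
    rw [e1, e2, e3, e4]
  have hJJ : ∀ a b, (J₁ * J₂) a b = 1 := by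
    intro a b; simp [hJ₁, hJ₂, Matrix.mul_apply]
  have hdetB : (A + J₁ * J₂).det = 0 := by
    refine det_eq_zero_of_alt _ ?_ ?_ hodd
    · intro i j
      rw [Matrix.add_apply, Matrix.add_apply, hJJ i j, hJJ j i]
      have hAij : A i j = A j i := by
        simp only [hAdef, nbhdMatrix, Matrix.of_apply]
        exact if_congr (or_congr eq_comm (G.adj_comm i j)) rfl rfl
      rw [hAij]
    · intro i
      have hAii : A i i = 1 := by simp [hAdef, nbhdMatrix]
      rw [Matrix.add_apply, hAii, hJJ i i]
      decide
  have hdetE : E.det = 1 := by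
    rw [hE, Matrix.det_fromBlocks_zero₂₁]; simp
  have hdetM : M.det = 0 := by
    have := congrArg Matrix.det hEM
    rw [Matrix.det_mul, hdetE, one_mul, Matrix.det_fromBlocks_zero₁₂, hdetB, zero_mul] at this
    exact this
  have := (Matrix.isUnit_iff_isUnit_det M).mp hU
  rw [hdetM] at this
  exact (by simp : ¬ IsUnit (0 : ZMod 2)) this
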